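/- For the indexed-stack construction along a path: if the index i = ind(s'_m)(j) of position j in the indexed stack at step m satisfies i > 0, then i−1 is the largest integer such that the j-th letter of the encoding of the stack at step m is a copy of the top symbol of the stack at step i−1; if i = 0, then that letter is a copy of no top symbol of any earlier configuration. -/

import Mathlib

/-- Stacks with links: a symbol carries its link, represented numerically by
the order `e` of the link and the height `h` of the target stack (the target
of an `e`-link is the prefix of the enclosing `e`-stack of height `h`).
Sequences are written top-first. -/
inductive LSt (Γ : Type) where
  | sym : Γ → ℕ → ℕ → LSt Γ
  | seq : List (LSt Γ) → LSt Γ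

namespace LSt

variable {Γ : Type}

/-- The top symbol of a stack, together with its link data. -/
def topSym : LSt Γ → Option (Γ × ℕ × ℕ)
  | .sym g e h => some (g, e, h)
  | .seq [] => none
  | .seq (t :: _) => topSym t

/-- Rewrite the top symbol, keeping its link. -/
def rewTop (g : Γ) : LSt Γ → Option (LSt Γ)
  | .sym _ e h => some (.sym g e h)
  | .seq [] => none
  | .seq (t :: r) => (rewTop g t).map fun t' => .seq (t' :: r)

/-- `popOp k n s`: remove the top `(k-1)`-stack of the order-`n` stack `s`. -/
def popOp (k : ℕ) : ℕ → LSt Γ → Option (LSt Γ)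
  | _, .sym _ _ _ => none
  | _, .seq [] => none
  | n, .seq (t :: r) =>
    if k = n then (match r with | [] => none | _ :: _ => some (.seq r))
    else (popOp k (n - 1) t).map fun t' => .seq (t' :: r)

/-- `pushkOp k n s`: duplicate the top `(k-1)`-stack (links preserved). -/
def pushkOp (k : ℕ) : ℕ → LSt Γ → Option (LSt Γ)
  | n, .seq (t :: r) =>
    if k = n then some (.seq (t :: t :: r))
    else (pushkOp k (n - 1) t).map fun t' => .seq (t' :: r)
  | _, _ => none

/-- The top `e`-stack of the order-`n` stack `s` (descend along tops). -/
def stackAt (e : ℕ) : ℕ → LSt Γ → Option (LSt Γ)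
  | n, .sym g a b => if n ≤ e then some (.sym g a b) else none
  | n, .seq [] => if n ≤ e then some (.seq []) else none
  | n, .seq (t :: r) =>
    if n ≤ e then some (.seq (t :: r)) else stackAt e (n - 1) t

/-- The height of a stack (number of component stacks). -/
def height : LSt Γ → Option ℕ
  | .sym _ _ _ => none
  | .seq l => some l.length

/-- Push a symbol (with given link data) on the top 1-stack of the order-`n`
stack. -/
def pushSym (x : Γ × ℕ × ℕ) : ℕ → LSt Γ → Option (LSt Γ)
  | 1, .seq l => some (.seq (.sym x.1 x.2.1 x.2.2 :: l))
  | n + 2, .seq (t :: r) => (pushSym x (n + 1) t).map fun t' => .seq (t' :: r)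
  | _, _ => none

/-- `pushlOp n e g s`: push the symbol `g` with a link of order `e` to the
`(e-1)`-stack immediately below the top `(e-1)`-stack of the top `e`-stack. -/
def pushlOp (n e : ℕ) (g : Γ) (s : LSt Γ) : Option (LSt Γ) :=
  match stackAt e n s with
  | some t =>
    match height t with
    | some L => if 1 ≤ L then pushSym (g, e, L - 1) n s else none
    | none => none
  | none => none

/-- Truncate the top `e`-stack to its bottom `h` component stacks. -/
def truncAt (e h : ℕ) : ℕ → LSt Γ → Option (LSt Γ)
  | _, .sym _ _ _ => none
  | n, .seq [] => none
  | n, .seq (t :: r) =>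
    if n = e then
      (if 1 ≤ h ∧ h < (t :: r).length
        then some (.seq ((t :: r).drop ((t :: r).length - h)))
        else none)
    else (truncAt e h (n - 1) t).map fun t' => .seq (t' :: r)

/-- The collapse operation: follow the link of the top symbol. -/
def collapseOp (n : ℕ) (s : LSt Γ) : Option (LSt Γ) :=
  match topSym s with
  | some (_, e, h) => truncAt e h n s
  | none => none

/-- The empty order-`n` stack over the bottom symbol `b`. -/
def botN (b : Γ) : ℕ → LSt Γ
  | 0 => .sym b 1 0
  | n + 1 => .seq [botN b n]

end LSt

/-- Payload of an indexed stack symbol: the stack symbol, its index (the step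
from which the stored information is no longer updated), and its copy-history
(an identifier: the creation step, prefixed by the step of each higher-order
push that copied it; `y` is an ancestor-copy of `x` iff the identifier of `y`
is a suffix of that of `x`). -/
abbrev IPay (Γ : Type) := Γ × ℕ × List ℕ

/-- Set the index of the top symbol to `m`. -/
def setIdxTop {Γ : Type} (m : ℕ) : LSt (IPay Γ) → LSt (IPay Γ)
  | .sym p e h => .sym (p.1, m, p.2.2) e h
  | .seq [] => .seq []
  | .seq (t :: r) => .seq (setIdxTop m t :: r)

mutual
/-- Prefix `m` to the copy-history of every symbol (used for the fresh copy
created by a higher-order push at step `m`). -/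
def consIds {Γ : Type} (m : ℕ) : LSt (IPay Γ) → LSt (IPay Γ)
  | .sym p e h => .sym (p.1, p.2.1, m :: p.2.2) e h
  | .seq l => .seq (consIdsList m l)
def consIdsList {Γ : Type} (m : ℕ) : List (LSt (IPay Γ)) → List (LSt (IPay Γ))
  | [] => []
  | t :: r => consIds m t :: consIdsList m r
end

/-- Apply a function to the payload of the top symbol. -/
def mapTopP {Γ : Type} (f : IPay Γ → IPay Γ) : LSt (IPay Γ) → Option (LSt (IPay Γ))
  | .sym p e h => some (.sym (f p) e h)
  | .seq [] => none
  | .seq (t :: r) => (mapTopP f t).map fun t' => .seq (t' :: r)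

/-- Higher-order push at step `m`: duplicate the top `(k-1)`-stack; the
indices of the copied stack are inherited from the original, the former top
symbol (in the old copy) gets index `m`, and the symbols of the fresh copy
record the copying step in their history. -/
def pushkIdx {Γ : Type} (m k : ℕ) : ℕ → LSt (IPay Γ) → Option (LSt (IPay Γ))
  | n, .seq (t :: r) =>
    if k = n then some (.seq (consIds m t :: setIdxTop m t :: r))
    else (pushkIdx m k (n - 1) t).map fun t' => .seq (t' :: r)
  | _, _ => none

/-- Operations of an order-`n` CPDA (a top-rewriting is bundled with the
operation it precedes). -/
inductive IOp (Γ : Type) where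
  | rew : Γ → IOp Γ
  | push1 : ℕ → Γ → IOp Γ
  | pushk : ℕ → IOp Γ
  | popk : ℕ → IOp Γ
  | collapse : IOp Γ
  | nop : IOp Γ

/-- The step of the indexed-stack construction performed at step `m` (the
current configuration being `v_m`): on a `push₁` the former top symbol gets
index `m` and the new symbol is created with history `[m]`; on a `push_k` the
copied indices are inherited and the former top symbol gets index `m`; all
other operations inherit every index. -/
def stepIdx {Γ : Type} (m n : ℕ) : IOp Γ → LSt (IPay Γ) → Option (LSt (IPay Γ))
  | .rew g, s => mapTopP (fun p => (g, p.2.1, p.2.2)) s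
  | .push1 e g, s => LSt.pushlOp n e (g, 0, [m]) (setIdxTop m s)
  | .pushk k, s => pushkIdx m k n s
  | .popk k, s => LSt.popOp k n s
  | .collapse, s => LSt.collapseOp n s
  | .nop, s => some s

mutual
/-- The sequence of symbol payloads of a stack, listed top-first (so position
`0` is the top symbol, whose index is not yet settled). -/
def flatP {Γ : Type} : LSt (IPay Γ) → List (IPay Γ)
  | .sym p _ _ => [p]
  | .seq l => flatPList l
def flatPList {Γ : Type} : List (LSt (IPay Γ)) → List (IPay Γ)
  | [] => []
  | t :: r => flatP t ++ flatPList r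
end

/-!
Only the pair (index, copy-history) of each letter matters, and on the top-first list of these
pairs every step at time `m` either keeps a suffix (rewriting, pop, collapse), pushes a fresh
letter with history `[m]` above the old top, whose index becomes `m` (`push₁`), or prepends a
copy of a top segment with `m` consed onto every history, the old top again getting index `m`
(`push_k`). By induction, the histories present at time `m` mention only steps `≤ m`, and no
history is a suffix of the history of a letter below it. The latter says that a new top is never
copied by the letters underneath, so the claim survives for the old letters; a letter whose index
becomes `m` is a copy of the top at time `m - 1`; and the fresh `m` in the copied histories keeps
them from matching any earlier top that their originals did not match.
-/

theorem List.IsSuffix.tail {α : Type*} {l₁ l₂ : List α} (h : l₁ <:+ l₂) :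
    l₁.tail <:+ l₂.tail := by
  obtain ⟨d, rfl⟩ := h
  cases d with
  | nil => exact List.suffix_refl _
  | cons a d => exact (List.tail_suffix l₁).trans (List.suffix_append d l₁)

theorem List.IsSuffix.of_cons_cons {α : Type*} {a : α} {l₁ l₂ : List α}
    (h : a :: l₁ <:+ a :: l₂) : l₁ <:+ l₂ := by
  rcases List.suffix_cons_iff.1 h with h | h
  · exact (List.cons.inj h).2 ▸ List.suffix_refl l₁
  · exact (List.suffix_cons a l₁).trans h

section NoSuffix

variable {α : Type*}

theorem List.pairwise_not_suffix_singleton_cons {a : α} {H : List (List α)}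
    (ha : ∀ v ∈ H, a ∉ v) (hH : H.Pairwise (¬ · <:+ ·)) :
    ([a] :: H).Pairwise (¬ · <:+ ·) :=
  List.pairwise_cons.2 ⟨fun v hv hs => ha v hv (hs.subset (List.mem_singleton_self a)), hH⟩

theorem List.pairwise_not_suffix_map_cons_append {a : α} {H₁ H₂ : List (List α)}
    (ha : ∀ v ∈ H₁ ++ H₂, a ∉ v) (hH : (H₁ ++ H₂).Pairwise (¬ · <:+ ·)) :
    (H₁.map (a :: ·) ++ (H₁ ++ H₂)).Pairwise (¬ · <:+ ·) := by
  refine List.pairwise_append.2 ⟨?_, hH, ?_⟩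
  · exact List.pairwise_map.2 ((List.pairwise_append.1 hH).1.imp fun h hs => h hs.of_cons_cons)
  · intro u hu v hv hs
    obtain ⟨u, -, rfl⟩ := List.mem_map.1 hu
    exact ha v hv (hs.subset List.mem_cons_self)

end NoSuffix

def HistBounded (m : ℕ) (l : List (ℕ × List ℕ)) : Prop :=
  ∀ x ∈ l, ∀ a ∈ x.2, a ≤ m

def NoCopyBelow (l : List (ℕ × List ℕ)) : Prop :=
  (l.map Prod.snd).Pairwise (¬ · <:+ ·)

def IsCopyOfTop (u : List ℕ) (l : List (ℕ × List ℕ)) : Prop :=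
  ∃ y ∈ l.head?, y.2 <:+ u

def IndexCorrect (K : ℕ → List (ℕ × List ℕ)) (m : ℕ) (x : ℕ × List ℕ) : Prop :=
  (0 < x.1 → IsCopyOfTop x.2 (K (x.1 - 1))) ∧ ∀ i ≤ m, IsCopyOfTop x.2 (K i) → i < x.1

def recopy (m : ℕ) (x : ℕ × List ℕ) : ℕ × List ℕ := (x.1, m :: x.2)

/-- The effect of the step at time `m` on the (index, history) pairs: `drop` covers rewriting,
`pop_k`, collapse and the idle step. -/
inductive MarkStep (m : ℕ) : List (ℕ × List ℕ) → List (ℕ × List ℕ) → Prop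
  | drop {l l'} : l' <:+ l → MarkStep m l l'
  | push1 (x r) : MarkStep m (x :: r) ((0, [m]) :: (m, x.2) :: r)
  | pushk (x c r) : MarkStep m (x :: c ++ r) ((x :: c).map (recopy m) ++ (m, x.2) :: c ++ r)

section MarkStep

variable {m : ℕ} {l l' : List (ℕ × List ℕ)}

theorem HistBounded.mono {n : ℕ} (h : HistBounded m l) (hmn : m ≤ n) : HistBounded n l :=
  fun x hx a ha => (h x hx a ha).trans hmn

theorem MarkStep.histBounded (hl : HistBounded m l) (hs : MarkStep (m + 1) l l') :
    HistBounded (m + 1) l' := by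
  cases hs with
  | drop h => exact fun x hx => (hl.mono m.le_succ) x (h.subset hx)
  | push1 x r =>
    have hl' := hl.mono m.le_succ
    simp only [HistBounded, List.forall_mem_cons, List.mem_singleton] at hl' ⊢
    exact ⟨by simp, hl'⟩
  | pushk x c r =>
    have hl' := hl.mono m.le_succ
    simp only [HistBounded, List.mem_append, List.mem_cons, List.mem_map] at hl hl' ⊢
    rintro _ ((⟨y, hy, rfl⟩ | rfl | hy) | hy) a ha
    · simp only [recopy, List.mem_cons] at ha
      rcases ha with rfl | ha
      · rfl
      · exact hl' y (by tauto) a ha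
    · exact hl' x (by simp) a ha
    all_goals exact hl' _ (by tauto) a ha

theorem MarkStep.noCopyBelow (hl : HistBounded m l) (hfree : NoCopyBelow l)
    (hs : MarkStep (m + 1) l l') : NoCopyBelow l' := by
  have fresh : ∀ v ∈ l.map Prod.snd, m + 1 ∉ v := by
    simp only [List.mem_map]
    rintro _ ⟨x, hx, rfl⟩ hm
    exact absurd (hl x hx _ hm) (by omega)
  cases hs with
  | drop h => exact hfree.sublist (h.map Prod.snd).sublist
  | push1 x r => exact List.pairwise_not_suffix_singleton_cons fresh hfree
  | pushk x c r =>
    simp only [NoCopyBelow, List.map_append, List.map_cons] at fresh hfree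
    simpa [NoCopyBelow, recopy, Function.comp_def] using
      List.pairwise_not_suffix_map_cons_append (H₁ := x.2 :: c.map Prod.snd) fresh hfree

end MarkStep

theorem NoCopyBelow.not_isCopyOfTop {l : List (ℕ × List ℕ)} (h : NoCopyBelow l)
    {x : ℕ × List ℕ} (hx : x ∈ l.tail) : ¬ IsCopyOfTop x.2 l := by
  obtain _ | ⟨y, r⟩ := l
  · simp at hx
  rintro ⟨_, hy, hs⟩
  cases Option.mem_some_iff.1 hy
  exact (List.pairwise_cons.1 h).1 x.2 (List.mem_map_of_mem hx) hs

theorem IsCopyOfTop.of_cons {a : ℕ} {u : List ℕ} {l : List (ℕ × List ℕ)}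
    (h : IsCopyOfTop (a :: u) l) (ha : ∀ y ∈ l.head?, a ∉ y.2) : IsCopyOfTop u l := by
  obtain ⟨y, hy, hs⟩ := h
  refine ⟨y, hy, (List.suffix_cons_iff.1 hs).resolve_left fun he => ha y hy ?_⟩
  exact he ▸ List.mem_cons_self

section IndexCorrect

variable {K : ℕ → List (ℕ × List ℕ)} {m : ℕ} {x : ℕ × List ℕ}

theorem IndexCorrect.succ (h : IndexCorrect K m x) (hx : ¬ IsCopyOfTop x.2 (K (m + 1))) :
    IndexCorrect K (m + 1) x := by
  refine ⟨h.1, fun i hi hc => ?_⟩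
  rcases Nat.lt_or_eq_of_le hi with hi | rfl
  · exact h.2 i (Nat.le_of_lt_succ hi) hc
  · exact absurd hc hx

theorem indexCorrect_succ_of_head (hx : x ∈ (K m).head?)
    (hnew : ¬ IsCopyOfTop x.2 (K (m + 1))) : IndexCorrect K (m + 1) (m + 1, x.2) :=
  IndexCorrect.succ
    ⟨fun _ => ⟨x, hx, List.suffix_refl _⟩, fun _ hi _ => Nat.lt_succ_of_le hi⟩ hnew

theorem IndexCorrect.recopy (h : IndexCorrect K m x) (hK : ∀ i ≤ m, HistBounded i (K i)) :
    IndexCorrect K m (recopy (m + 1) x) := by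
  refine ⟨fun hx => ?_, fun i hi hc => h.2 i hi (hc.of_cons fun y hy hmem => ?_)⟩
  · obtain ⟨y, hy, hs⟩ := h.1 hx
    exact ⟨y, hy, hs.trans (List.suffix_cons _ _)⟩
  · have := hK i hi y (List.mem_of_mem_head? hy) _ hmem
    omega

theorem MarkStep.indexCorrect (hK : ∀ i ≤ m, HistBounded i (K i))
    (hfree : NoCopyBelow (K (m + 1))) (hcorr : ∀ x ∈ (K m).tail, IndexCorrect K m x)
    (hs : MarkStep (m + 1) (K m) (K (m + 1))) :
    ∀ x ∈ (K (m + 1)).tail, IndexCorrect K (m + 1) x := by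
  generalize hl : K m = l at hcorr hs
  generalize hl' : K (m + 1) = l' at hfree hs
  have hnew : ∀ x ∈ l'.tail, ¬ IsCopyOfTop x.2 (K (m + 1)) :=
    fun _ hx => hl' ▸ hfree.not_isCopyOfTop hx
  have hold : ∀ x ∈ l.tail, x ∈ l'.tail → IndexCorrect K (m + 1) x :=
    fun x hx hx' => (hcorr x hx).succ (hnew x hx')
  cases hs with
  | drop h => exact fun x hx => hold x (h.tail.subset hx) hx
  | push1 y r =>
    intro x hx
    rcases List.mem_cons.1 hx with rfl | hx
    · exact indexCorrect_succ_of_head (by simp [hl]) (hnew (m + 1, y.2) (by simp))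
    · exact hold x hx (by simp [hx])
  | pushk y c r =>
    intro x hx
    simp only [List.map_cons, List.cons_append, List.tail_cons, List.mem_append, List.mem_map,
      List.mem_cons] at hx
    rcases hx with (⟨z, hz, rfl⟩ | rfl | hx) | hx
    · refine ((hcorr z (by simp [hz])).recopy hK).succ (hnew _ ?_)
      simp only [List.map_cons, List.cons_append, List.tail_cons]
      exact List.mem_append_left _ (List.mem_append_left _ (List.mem_map_of_mem hz))
    · exact indexCorrect_succ_of_head (by simp [hl]) (hnew (m + 1, y.2) (by simp))
    all_goals exact hold x (by simp [hx]) (by simp [hx])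

end IndexCorrect

theorem indexCorrect_of_markStep (K : ℕ → List (ℕ × List ℕ)) (h0 : K 0 = [(0, [])])
    (hs : ∀ m, MarkStep (m + 1) (K m) (K (m + 1))) (m : ℕ) :
    ∀ x ∈ (K m).tail, IndexCorrect K m x := by
  have hbound : ∀ m, HistBounded m (K m) := by
    intro m
    induction m with
    | zero => simp [h0, HistBounded]
    | succ m ih => exact (hs m).histBounded ih
  have hfree : ∀ m, NoCopyBelow (K m) := by
    intro m
    induction m with
    | zero => simp [h0, NoCopyBelow]
    | succ m ih => exact (hs m).noCopyBelow (hbound m) ih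
  induction m with
  | zero => simp [h0]
  | succ m ih => exact (hs m).indexCorrect (fun i _ => hbound i) (hfree (m + 1)) ih

namespace LSt

variable {α : Type}

inductive SeqsNonempty : LSt α → Prop
  | sym (g : α) (e h : ℕ) : SeqsNonempty (.sym g e h)
  | seq {l : List (LSt α)} : l ≠ [] → (∀ t ∈ l, SeqsNonempty t) → SeqsNonempty (.seq l)

@[simp]
theorem seqsNonempty_seq_iff {l : List (LSt α)} :
    SeqsNonempty (.seq l) ↔ l ≠ [] ∧ ∀ t ∈ l, SeqsNonempty t :=
  ⟨fun | .seq hl ht => ⟨hl, ht⟩, fun h => .seq h.1 h.2⟩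

theorem SeqsNonempty.exists_topSym {s : LSt α} (h : SeqsNonempty s) :
    ∃ x, topSym s = some x := by
  induction h with
  | sym g e h => exact ⟨(g, e, h), rfl⟩
  | @seq l hl _ ih =>
    obtain _ | ⟨t, r⟩ := l
    · contradiction
    · exact ih t List.mem_cons_self

theorem SeqsNonempty.seq_cons {t t' : LSt α} {r : List (LSt α)}
    (h : SeqsNonempty (.seq (t :: r))) (ht' : SeqsNonempty t') : SeqsNonempty (.seq (t' :: r)) := by
  simp_all

theorem SeqsNonempty.of_seq_cons {t : LSt α} {r : List (LSt α)}
    (h : SeqsNonempty (.seq (t :: r))) : SeqsNonempty t := by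
  simp_all

theorem seqsNonempty_botN (b : α) (n : ℕ) : SeqsNonempty (botN b n) := by
  induction n with
  | zero => exact .sym _ _ _
  | succ n ih => simpa [botN] using ih

end LSt

open LSt

section Flatten

variable {Γ : Type}

theorem flatPList_eq_flatMap (l : List (LSt (IPay Γ))) : flatPList l = l.flatMap flatP := by
  induction l with
  | nil => rfl
  | cons t r ih => simp [flatPList, ih]

@[simp]
theorem flatP_seq (l : List (LSt (IPay Γ))) : flatP (.seq l) = l.flatMap flatP := by
  rw [flatP, flatPList_eq_flatMap]

@[simp]
theorem flatP_sym (p : IPay Γ) (e h : ℕ) : flatP (.sym p e h) = [p] := by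
  rw [flatP]

theorem flatP_botN (b : IPay Γ) (n : ℕ) : flatP (botN b n) = [b] := by
  induction n with
  | zero => rfl
  | succ n ih => simp [botN, ih]

theorem exists_flatP_eq_cons_of_topSym {p : IPay Γ} {e h : ℕ} :
    ∀ {s : LSt (IPay Γ)}, topSym s = some (p, e, h) → ∃ r, flatP s = p :: r
  | .sym _ _ _, hs => ⟨[], by simp_all [topSym]⟩
  | .seq [], hs => by simp [topSym] at hs
  | .seq (t :: r), hs => by
    obtain ⟨r', hr'⟩ := exists_flatP_eq_cons_of_topSym (s := t) hs
    exact ⟨r' ++ r.flatMap flatP, by simp [hr']⟩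

end Flatten

section Operations

variable {Γ : Type}

theorem setIdxTop_spec (m : ℕ) {s : LSt (IPay Γ)} (hw : SeqsNonempty s) :
    SeqsNonempty (setIdxTop m s) ∧
      ∃ g r, flatP s = g :: r ∧ flatP (setIdxTop m s) = (g.1, m, g.2.2) :: r := by
  induction hw with
  | sym p e h => exact ⟨.sym _ _ _, p, [], rfl, rfl⟩
  | @seq l hl hall ih =>
    obtain _ | ⟨t, r⟩ := l
    · contradiction
    obtain ⟨hw', g, r', h₁, h₂⟩ := ih t List.mem_cons_self
    refine ⟨SeqsNonempty.seq_cons (.seq hl hall) hw', g, r' ++ r.flatMap flatP, ?_, ?_⟩ <;>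
      simp [setIdxTop, h₁, h₂]

mutual
theorem flatP_consIds (m : ℕ) :
    ∀ s : LSt (IPay Γ), flatP (consIds m s) = (flatP s).map fun p => (p.1, p.2.1, m :: p.2.2)
  | .sym _ _ _ => rfl
  | .seq l => by rw [consIds, flatP, flatP, flatPList_consIdsList]
theorem flatPList_consIdsList (m : ℕ) :
    ∀ l : List (LSt (IPay Γ)),
      flatPList (consIdsList m l) = (flatPList l).map fun p => (p.1, p.2.1, m :: p.2.2)
  | [] => rfl
  | t :: r => by
    rw [consIdsList, flatPList, flatPList, flatP_consIds, flatPList_consIdsList, List.map_append]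
end

theorem consIdsList_eq_map (m : ℕ) (l : List (LSt (IPay Γ))) :
    consIdsList m l = l.map (consIds m) := by
  induction l with
  | nil => rfl
  | cons t r ih => rw [consIdsList, ih, List.map_cons]

theorem seqsNonempty_consIds (m : ℕ) {s : LSt (IPay Γ)} (hw : SeqsNonempty s) :
    SeqsNonempty (consIds m s) := by
  induction hw with
  | sym => exact .sym _ _ _
  | seq hl _ ih => simpa [consIds, consIdsList_eq_map, hl] using ih

theorem mapTopP_spec (f : IPay Γ → IPay Γ) :
    ∀ {s s' : LSt (IPay Γ)}, SeqsNonempty s → mapTopP f s = some s' →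
      SeqsNonempty s' ∧ ∃ g r, flatP s = g :: r ∧ flatP s' = f g :: r
  | .sym p e h, _, _, hs => by
    cases Option.some.inj hs
    exact ⟨.sym _ _ _, p, [], rfl, rfl⟩
  | .seq [], _, _, hs => by simp [mapTopP] at hs
  | .seq (t :: r), _, hw, hs => by
    obtain ⟨t', ht', rfl⟩ := Option.map_eq_some_iff.1 hs
    obtain ⟨hw', g, r', h₁, h₂⟩ := mapTopP_spec f hw.of_seq_cons ht'
    exact ⟨hw.seq_cons hw', g, r' ++ r.flatMap flatP, by simp [h₁], by simp [h₂]⟩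

theorem pushSym_spec (x : IPay Γ × ℕ × ℕ) :
    ∀ (k : ℕ) {s s' : LSt (IPay Γ)}, SeqsNonempty s → pushSym x k s = some s' →
      SeqsNonempty s' ∧ flatP s' = x.1 :: flatP s
  | 1, .seq l, _, hw, hs => by
    cases Option.some.inj hs
    simp_all [SeqsNonempty.sym]
  | k + 2, .seq (t :: r), _, hw, hs => by
    obtain ⟨t', ht', rfl⟩ := Option.map_eq_some_iff.1 hs
    obtain ⟨hw', h⟩ := pushSym_spec x (k + 1) hw.of_seq_cons ht'
    exact ⟨hw.seq_cons hw', by simp [h]⟩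
  | 0, _, _, _, hs | 1, .sym _ _ _, _, _, hs | k + 2, .sym _ _ _, _, _, hs
  | k + 2, .seq [], _, _, hs => by simp [pushSym] at hs

theorem exists_pushSym_of_pushlOp {n e : ℕ} {g : IPay Γ} {s s' : LSt (IPay Γ)}
    (hs : pushlOp n e g s = some s') : ∃ L, pushSym (g, e, L) n s = some s' := by
  unfold pushlOp at hs
  split at hs <;> [split at hs; simp at hs]
  · split at hs <;> [exact ⟨_, hs⟩; simp at hs]
  · simp at hs

theorem pushkIdx_spec (m k : ℕ) :
    ∀ (n : ℕ) {s s' : LSt (IPay Γ)}, SeqsNonempty s → pushkIdx m k n s = some s' →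
      SeqsNonempty s' ∧ ∃ g c r, flatP s = g :: c ++ r ∧
        flatP s' = (g :: c).map (fun p => (p.1, p.2.1, m :: p.2.2)) ++ (g.1, m, g.2.2) :: c ++ r
  | n, .seq (t :: r), _, hw, hs => by
    simp only [pushkIdx] at hs
    split_ifs at hs
    · cases Option.some.inj hs
      have ht := hw.of_seq_cons
      obtain ⟨hw', g, c, h₁, h₂⟩ := setIdxTop_spec m ht
      refine ⟨?_, g, c, r.flatMap flatP, by simp [h₁], by simp [flatP_consIds, h₁, h₂]⟩
      simp_all [seqsNonempty_consIds]
    · obtain ⟨t', ht', rfl⟩ := Option.map_eq_some_iff.1 hs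
      obtain ⟨hw', g, c, r', h₁, h₂⟩ := pushkIdx_spec m k (n - 1) hw.of_seq_cons ht'
      exact ⟨hw.seq_cons hw', g, c, r' ++ r.flatMap flatP, by simp [h₁], by simp [h₂]⟩
  | _, .sym _ _ _, _, _, hs | _, .seq [], _, _, hs => by simp [pushkIdx] at hs

theorem popOp_spec (k : ℕ) :
    ∀ (n : ℕ) {s s' : LSt (IPay Γ)}, SeqsNonempty s → popOp k n s = some s' →
      SeqsNonempty s' ∧ flatP s' <:+ flatP s
  | n, .seq (t :: r), _, hw, hs => by
    simp only [popOp] at hs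
    split_ifs at hs
    · obtain _ | ⟨t₂, r₂⟩ := r
      · simp at hs
      cases Option.some.inj hs
      exact ⟨by simp_all, by simp⟩
    · obtain ⟨t', ht', rfl⟩ := Option.map_eq_some_iff.1 hs
      obtain ⟨hw', h⟩ := popOp_spec k (n - 1) hw.of_seq_cons ht'
      exact ⟨hw.seq_cons hw', by simpa using List.suffix_append_self_iff.2 h⟩
  | _, .sym _ _ _, _, _, hs | _, .seq [], _, _, hs => by simp [popOp] at hs

theorem truncAt_spec (e h : ℕ) :
    ∀ (n : ℕ) {s s' : LSt (IPay Γ)}, SeqsNonempty s → truncAt e h n s = some s' →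
      SeqsNonempty s' ∧ flatP s' <:+ flatP s
  | n, .seq (t :: r), _, hw, hs => by
    simp only [truncAt] at hs
    split_ifs at hs
    · cases Option.some.inj hs
      refine ⟨?_, by simpa only [flatP_seq] using (List.drop_suffix _ _).flatMap flatP⟩
      simp only [seqsNonempty_seq_iff] at hw ⊢
      refine ⟨?_, fun u hu => hw.2 u (List.drop_subset _ _ hu)⟩
      simp only [ne_eq, List.drop_eq_nil_iff, List.length_cons]
      omega
    · obtain ⟨t', ht', rfl⟩ := Option.map_eq_some_iff.1 hs
      obtain ⟨hw', h⟩ := truncAt_spec e h (n - 1) hw.of_seq_cons ht'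
      exact ⟨hw.seq_cons hw', by simpa using List.suffix_append_self_iff.2 h⟩
  | _, .sym _ _ _, _, _, hs | _, .seq [], _, _, hs => by simp [truncAt] at hs

theorem collapseOp_spec {n : ℕ} {s s' : LSt (IPay Γ)} (hw : SeqsNonempty s)
    (hs : collapseOp n s = some s') : SeqsNonempty s' ∧ flatP s' <:+ flatP s := by
  unfold collapseOp at hs
  split at hs
  · exact truncAt_spec _ _ _ hw hs
  · simp at hs

end Operations

section Marks

variable {Γ : Type}

def marks (s : LSt (IPay Γ)) : List (ℕ × List ℕ) :=
  (flatP s).map Prod.snd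

theorem markStep_of_stepIdx {m n : ℕ} {op : IOp Γ} {s s' : LSt (IPay Γ)} (hw : SeqsNonempty s)
    (hs : stepIdx m n op s = some s') : SeqsNonempty s' ∧ MarkStep m (marks s) (marks s') := by
  cases op with
  | rew g =>
    obtain ⟨hw', p, r, h₁, h₂⟩ := mapTopP_spec _ hw hs
    exact ⟨hw', .drop (by simp [marks, h₁, h₂])⟩
  | push1 e g =>
    obtain ⟨L, hps⟩ := exists_pushSym_of_pushlOp hs
    obtain ⟨hwi, p, r, h₁, h₂⟩ := setIdxTop_spec m hw
    obtain ⟨hw', h⟩ := pushSym_spec _ n hwi hps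
    refine ⟨hw', ?_⟩
    simpa [marks, h, h₁, h₂] using MarkStep.push1 (m := m) p.2 (r.map Prod.snd)
  | pushk k =>
    obtain ⟨hw', g, c, r, h₁, h₂⟩ := pushkIdx_spec m k n hw hs
    refine ⟨hw', ?_⟩
    simpa [marks, h₁, h₂, recopy, Function.comp_def] using
      MarkStep.pushk (m := m) g.2 (c.map Prod.snd) (r.map Prod.snd)
  | popk k =>
    obtain ⟨hw', h⟩ := popOp_spec k n hw hs
    exact ⟨hw', .drop (h.map _)⟩
  | collapse =>
    obtain ⟨hw', h⟩ := collapseOp_spec hw hs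
    exact ⟨hw', .drop (h.map _)⟩
  | nop =>
    cases Option.some.inj hs
    exact ⟨hw, .drop (List.suffix_refl _)⟩

theorem isCopyOfTop_marks_iff {s : LSt (IPay Γ)} (hw : SeqsNonempty s) {u : List ℕ} :
    IsCopyOfTop u (marks s) ↔ ∃ p e h, topSym s = some (p, e, h) ∧ p.2.2 <:+ u := by
  obtain ⟨⟨p, e, h⟩, ht⟩ := hw.exists_topSym
  obtain ⟨r, hr⟩ := exists_flatP_eq_cons_of_topSym ht
  simp [IsCopyOfTop, marks, hr, ht]

end Marks

/-- Along a path of an order-`n` CPDA starting from the initial configuration,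
consider the associated indexed stacks.  If the index `ix` of a (non-top)
position `j` of the stack at step `m` satisfies `ix > 0`, then `ix - 1` is
the largest step `i'` such that the `j`-th letter is a copy of the top symbol
of the stack at step `i'` (copy: the identifier of that top symbol is a
suffix of the identifier of the letter); and if `ix = 0` then the letter is a
copy of no top symbol of any configuration of the path. -/
theorem stmt16 {Γ : Type} (n : ℕ) (γ₀ : Γ)
    (s : ℕ → LSt (IPay Γ)) (ops : ℕ → IOp Γ)
    (h0 : s 0 = LSt.botN (γ₀, 0, ([] : List ℕ)) n)
    (hstep : ∀ m, stepIdx (m + 1) n (ops m) (s m) = some (s (m + 1))) :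
    ∀ m j g ix ids, (flatP (s m))[j]? = some (g, ix, ids) → 1 ≤ j →
      ((0 < ix →
        (∃ p e h, LSt.topSym (s (ix - 1)) = some (p, e, h) ∧ p.2.2 <:+ ids) ∧
        (∀ i', i' ≤ m → ∀ p e h, LSt.topSym (s i') = some (p, e, h) →
          p.2.2 <:+ ids → i' ≤ ix - 1)) ∧
      (ix = 0 → ∀ i', i' ≤ m → ∀ p e h, LSt.topSym (s i') = some (p, e, h) →
        ¬ p.2.2 <:+ ids)) := by
  set K : ℕ → List (ℕ × List ℕ) := fun i => marks (s i)
  have hw : ∀ m, SeqsNonempty (s m) := by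
    intro m
    induction m with
    | zero => exact h0 ▸ seqsNonempty_botN _ n
    | succ m ih => exact (markStep_of_stepIdx ih (hstep m)).1
  have hcorr := indexCorrect_of_markStep K (by simp [K, marks, h0, flatP_botN])
    fun m => (markStep_of_stepIdx (hw m) (hstep m)).2
  intro m j g ix ids hj hj1
  have hx : (ix, ids) ∈ (K m).tail := by
    refine List.mem_of_getElem? (i := j - 1) ?_
    rw [List.getElem?_tail, Nat.sub_add_cancel hj1]
    simp [K, marks, hj]
  obtain ⟨hpos, hmax⟩ := hcorr m _ hx
  have hcopy : ∀ i, IsCopyOfTop ids (K i) ↔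
      ∃ p e h, topSym (s i) = some (p, e, h) ∧ p.2.2 <:+ ids :=
    fun i => isCopyOfTop_marks_iff (hw i)
  refine ⟨fun hix => ⟨(hcopy _).1 (hpos hix), fun i hi p e h ht hs => ?_⟩,
    fun hix i hi p e h ht hs => ?_⟩ <;>
  · have := hmax i hi ((hcopy i).2 ⟨p, e, h, ht, hs⟩)
    omega
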